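/- Insertion identity: for any lists X, Y and ad y, E(X ++ [y] ++ Y) − E(X ++ Y) = q(X)·(e_y − (1 − q_y)·E(Y)). -/

import Mathlib

noncomputable section

/-- Efficiency of an ordered list of ads `(e, q)`. -/
def eff : List (ℝ × ℝ) → ℝ
  | [] => 0
  | a :: L => a.1 + a.2 * eff L

/-- Product of continuation probabilities of a list of ads. -/
def qprod (L : List (ℝ × ℝ)) : ℝ := (L.map Prod.snd).prod

@[simp]
theorem qprod_nil : qprod [] = 1 := rfl

@[simp]
theorem qprod_cons (a : ℝ × ℝ) (L : List (ℝ × ℝ)) : qprod (a :: L) = a.2 * qprod L := by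
  simp [qprod]

theorem eff_append (X Y : List (ℝ × ℝ)) : eff (X ++ Y) = eff X + qprod X * eff Y := by
  induction X with
  | nil => simp [eff]
  | cons a X ih =>
    simp only [List.cons_append, eff, ih, qprod_cons]
    ring

/-- Insertion identity: `E(X ++ [y] ++ Y) − E(X ++ Y) = q(X)·(e_y − (1 − q_y)·E(Y))`. -/
theorem eff_insert (X Y : List (ℝ × ℝ)) (y : ℝ × ℝ) :
    eff (X ++ [y] ++ Y) - eff (X ++ Y) = qprod X * (y.1 - (1 - y.2) * eff Y) := by
  rw [List.append_assoc, List.singleton_append, eff_append, eff_append, eff]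
  ring
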